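/- For any symmetric-about-c density γ(μ;c), if x > c > 0, then the conditional posterior probability P(μ ≤ x | X = x, μ ≠ 0) is at least P(μ > x | X = x, μ ≠ 0), where the posterior is with respect to the prior (1−w)δ₀ + w γ(·;c) and likelihood X | μ ∼ N(μ,1). Consequently the posterior median δ(x;w,c) satisfies δ(x;w,c) ≤ x for x > c > 0. -/

import Mathlib

open MeasureTheory Real

/-- Standard normal density. -/
noncomputable def stdN (x : ℝ) : ℝ := (Real.sqrt (2 * Real.pi))⁻¹ * Real.exp (-x ^ 2 / 2)

/-- Convolution `g(x;c) = ∫ φ(x−μ) γ₀(μ−c) dμ`. -/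
noncomputable def conv (γ₀ : ℝ → ℝ) (c x : ℝ) : ℝ := ∫ μ : ℝ, stdN (x - μ) * γ₀ (μ - c)

/-- Marginal density `m(x;w,c) = (1−w)φ(x) + w g(x;c)`. -/
noncomputable def marg (γ₀ : ℝ → ℝ) (w c x : ℝ) : ℝ := (1 - w) * stdN x + w * conv γ₀ c x

/-- Posterior CDF of `μ` given `X = x` under the prior `(1−w)δ₀ + w γ₀(·−c)`
and likelihood `X | μ ∼ N(μ,1)`. -/
noncomputable def postCDF (γ₀ : ℝ → ℝ) (w c x t : ℝ) : ℝ :=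
  ((1 - w) * stdN x * (if (0:ℝ) ≤ t then 1 else 0)
    + w * ∫ μ in Set.Iic t, stdN (x - μ) * γ₀ (μ - c)) / marg γ₀ w c x

/-- Posterior median. -/
noncomputable def postMedian (γ₀ : ℝ → ℝ) (w c x : ℝ) : ℝ :=
  sInf {t : ℝ | 1 / 2 ≤ postCDF γ₀ w c x t}

/-! The reflection `μ ↦ 2x − μ` about the observation fixes the Gaussian factor `φ(x − μ)` and carries
the upper half-line `μ > x` onto the lower one. For `c < x` the reflected point `2x − μ` is
farther from the centre `c` than `μ` is, so by unimodality the prior density, and hence the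
integrand, only decreases under the reflection: the part of `h(·|x)` above `x` weighs at most the
part below it. Since `0 ≤ x`, the atom at `0` lies below `x` as well, so the posterior CDF at `x`
is at least `1/2`. -/

open Set

lemma stdN_pos (y : ℝ) : 0 < stdN y := by
  unfold stdN
  positivity

lemma stdN_le (y : ℝ) : stdN y ≤ (√(2 * π))⁻¹ := by
  unfold stdN
  have hexp : exp (-y ^ 2 / 2) ≤ 1 := exp_le_one_iff.mpr (by nlinarith [sq_nonneg y])
  exact mul_le_of_le_one_right (by positivity) hexp

lemma stdN_neg (y : ℝ) : stdN (-y) = stdN y := by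
  simp only [stdN, neg_sq]

lemma stdN_sub_comm (x y : ℝ) : stdN (x - y) = stdN (y - x) := by
  rw [← stdN_neg, neg_sub]

lemma integrable_stdN_sub_mul {f : ℝ → ℝ} (hf : Integrable f) (x : ℝ) :
    Integrable fun μ ↦ stdN (x - μ) * f μ := by
  refine hf.bdd_mul (c := (√(2 * π))⁻¹) (by unfold stdN; fun_prop) (.of_forall fun μ ↦ ?_)
  rw [norm_of_nonneg (stdN_pos _).le]
  exact stdN_le _

theorem setIntegral_Ioi_le_setIntegral_Iic_of_reflect_le {F : ℝ → ℝ} (hF : Integrable F) (a : ℝ)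
    (hrefl : ∀ μ < a, F (2 * a - μ) ≤ F μ) :
    ∫ μ in Ioi a, F μ ≤ ∫ μ in Iic a, F μ := by
  have hreflect : ∫ μ in Ioi a, F μ = ∫ μ in Iio a, F (2 * a - μ) := by
    have hpre : (fun μ : ℝ ↦ 2 * a - μ) ⁻¹' Ioi a = Iio a := by
      ext μ
      simp only [mem_preimage, mem_Ioi, mem_Iio]
      constructor <;> intro <;> linarith
    rw [← hpre]
    exact ((Measure.measurePreserving_sub_left volume (2 * a)).setIntegral_preimage_emb
      (MeasurableEquiv.subLeft (2 * a)).measurableEmbedding F (Ioi a)).symm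
  rw [hreflect, integral_Iic_eq_integral_Iio]
  exact setIntegral_mono_on (hF.comp_sub_left (2 * a)).integrableOn hF.integrableOn
    measurableSet_Iio hrefl

lemma conv_pos {γ₀ : ℝ → ℝ} (hnonneg : ∀ u, 0 ≤ γ₀ u) (hint : Integrable γ₀)
    (hmass : 0 < ∫ u, γ₀ u) (c x : ℝ) : 0 < conv γ₀ c x := by
  have hshift : Integrable fun μ ↦ γ₀ (μ - c) := hint.comp_sub_right c
  have hsupp : 0 < volume (Function.support fun μ ↦ γ₀ (μ - c)) := by
    rwa [← integral_pos_iff_support_of_nonneg (fun μ ↦ hnonneg _) hshift,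
      integral_sub_right_eq_self γ₀ c]
  rw [conv, integral_pos_iff_support_of_nonneg
    (fun μ ↦ mul_nonneg (stdN_pos _).le (hnonneg _)) (integrable_stdN_sub_mul hshift x)]
  rwa [Function.support_mul_of_ne_zero_left (fun μ ↦ (stdN_pos (x - μ)).ne')]

lemma half_le_postCDF {γ₀ : ℝ → ℝ} {w c x t : ℝ} (hw : 0 < w) (hw1 : w ≤ 1) (ht : 0 ≤ t)
    (hint : Integrable fun μ ↦ stdN (x - μ) * γ₀ (μ - c)) (hconv : 0 < conv γ₀ c x)
    (hhalf : ∫ μ in Ioi t, stdN (x - μ) * γ₀ (μ - c) ≤ ∫ μ in Iic t, stdN (x - μ) * γ₀ (μ - c)) :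
    1 / 2 ≤ postCDF γ₀ w c x t := by
  have hsplit : conv γ₀ c x = (∫ μ in Iic t, stdN (x - μ) * γ₀ (μ - c))
      + ∫ μ in Ioi t, stdN (x - μ) * γ₀ (μ - c) :=
    (intervalIntegral.integral_Iic_add_Ioi hint.integrableOn hint.integrableOn).symm
  have hatom : 0 ≤ (1 - w) * stdN x := mul_nonneg (by linarith) (stdN_pos x).le
  have hmarg : 0 < marg γ₀ w c x := by
    rw [marg]
    nlinarith
  rw [postCDF, if_pos ht, le_div_iff₀ hmarg, marg, hsplit]
  nlinarith

/-- `postMedian` is an `sInf`, which is `0` on a set unbounded below; hence `0 ≤ t`. -/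
lemma postMedian_le {γ₀ : ℝ → ℝ} {w c x t : ℝ} (ht : 0 ≤ t) (h : 1 / 2 ≤ postCDF γ₀ w c x t) :
    postMedian γ₀ w c x ≤ t := by
  rw [postMedian]
  by_cases hbdd : BddBelow {t : ℝ | 1 / 2 ≤ postCDF γ₀ w c x t}
  · exact csInf_le hbdd h
  · rwa [Real.sInf_of_not_bddBelow hbdd]

lemma unimodal_reflect_le {γ₀ : ℝ → ℝ} (hunimodal : ∀ u v : ℝ, |u| ≤ |v| → γ₀ v ≤ γ₀ u)
    {c x μ : ℝ} (hx : c ≤ x) (hμ : μ ≤ x) : γ₀ (2 * x - μ - c) ≤ γ₀ (μ - c) :=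
  hunimodal _ _ <| by
    rw [abs_of_nonneg (by linarith : 0 ≤ 2 * x - μ - c)]
    exact abs_le.mpr ⟨by linarith, by linarith⟩

theorem stmt1_general (γ₀ : ℝ → ℝ) (hnonneg : ∀ u, 0 ≤ γ₀ u)
    (hint : Integrable γ₀) (hdens : ∫ u : ℝ, γ₀ u = 1)
    (hunimodal : ∀ u v : ℝ, |u| ≤ |v| → γ₀ v ≤ γ₀ u)
    (w c x : ℝ) (hw : 0 < w) (hw1 : w ≤ 1) (hc : 0 < c) (hx : c < x) :
    (∫ μ in Set.Ioi x, stdN (x - μ) * γ₀ (μ - c)) / conv γ₀ c x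
        ≤ (∫ μ in Set.Iic x, stdN (x - μ) * γ₀ (μ - c)) / conv γ₀ c x ∧
      postMedian γ₀ w c x ≤ x := by
  have hF : Integrable fun μ ↦ stdN (x - μ) * γ₀ (μ - c) :=
    integrable_stdN_sub_mul (hint.comp_sub_right c) x
  have hhalf : ∫ μ in Ioi x, stdN (x - μ) * γ₀ (μ - c) ≤ ∫ μ in Iic x, stdN (x - μ) * γ₀ (μ - c) :=
    setIntegral_Ioi_le_setIntegral_Iic_of_reflect_le hF x fun μ hμ ↦ by
      rw [show x - (2 * x - μ) = μ - x by ring, ← stdN_sub_comm]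
      exact mul_le_mul_of_nonneg_left (unimodal_reflect_le hunimodal hx.le hμ.le) (stdN_pos _).le
  have hconv : 0 < conv γ₀ c x := conv_pos hnonneg hint (by rw [hdens]; exact one_pos) c x
  have hx0 : 0 ≤ x := by linarith
  exact ⟨div_le_div_of_nonneg_right hhalf hconv.le,
    postMedian_le hx0 (half_le_postCDF hw hw1 hx0 hF hconv hhalf)⟩

/-- For a density `γ₀` symmetric about `0` and unimodal, if `x > c > 0` then the
posterior probability `P(μ ≤ x | X = x, μ ≠ 0)` is at least `P(μ > x | X = x, μ ≠ 0)`,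
and consequently the posterior median satisfies `δ(x;w,c) ≤ x`. -/
theorem stmt1 (γ₀ : ℝ → ℝ) (hmeas : Measurable γ₀) (hnonneg : ∀ u, 0 ≤ γ₀ u)
    (hint : Integrable γ₀) (hdens : ∫ u : ℝ, γ₀ u = 1)
    (hsymm : ∀ u, γ₀ (-u) = γ₀ u)
    (hunimodal : ∀ u v : ℝ, |u| ≤ |v| → γ₀ v ≤ γ₀ u)
    (w c x : ℝ) (hw : 0 < w) (hw1 : w ≤ 1) (hc : 0 < c) (hx : c < x) :
    (∫ μ in Set.Ioi x, stdN (x - μ) * γ₀ (μ - c)) / conv γ₀ c x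
        ≤ (∫ μ in Set.Iic x, stdN (x - μ) * γ₀ (μ - c)) / conv γ₀ c x ∧
      postMedian γ₀ w c x ≤ x :=
  stmt1_general γ₀ hnonneg hint hdens hunimodal w c x hw hw1 hc hx
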